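/- arXiv:2110.14259 — 4 statements merged into one kernel-verified Lean document; each statement's English description precedes it below -/
import Mathlib

section
/- Let X be a Banach lattice of measurable functions on ℝ^n containing the characteristic functions of balls. Let B and B' be balls with the same radius r such that c_{B'} = c_B + 4r·e_j where e_j is the j-th coordinate unit vector. If the j-th Riesz transform R_j is bounded on X, then ‖χ_B‖_X ∼ ‖χ_{B'}‖_X with constants independent of B. -/
open MeasureTheory Metric Set ENNReal

noncomputable section

abbrev Euc (n : ℕ) := EuclideanSpace ℝ (Fin n)

/-- A Banach lattice of measurable functions on `ℝⁿ`, modeled through its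
(extended-real valued) norm functional. -/
structure BFL (n : ℕ) where
  N : (Euc n → ℝ) → ℝ≥0∞
  mono : ∀ f g : Euc n → ℝ, (∀ x, |g x| ≤ |f x|) → N g ≤ N f
  add_le : ∀ f g : Euc n → ℝ, N (f + g) ≤ N f + N g
  smul : ∀ (a : ℝ) (f : Euc n → ℝ), N (fun x => a * f x) = ENNReal.ofReal |a| * N f

/-- The Köthe dual norm of a Banach function lattice, evaluated on a
nonnegative (extended-real valued) function. -/
def kdual {n : ℕ} (X : BFL n) (g : Euc n → ℝ≥0∞) : ℝ≥0∞ :=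
  ⨆ (f : Euc n → ℝ) (_ : Measurable f ∧ X.N f ≤ 1), ∫⁻ x, ENNReal.ofReal |f x| * g x

/-- The Hardy–Littlewood maximal operator (uncentered, over balls). -/
def hlMax (n : ℕ) (g : Euc n → ℝ≥0∞) (y : Euc n) : ℝ≥0∞ :=
  ⨆ (c : Euc n) (r : ℝ) (_ : 0 < r ∧ y ∈ ball c r),
    (volume (ball c r))⁻¹ * ∫⁻ x in ball c r, g x

/-- The characteristic function of a ball, as a real valued function. -/
def chiR (n : ℕ) (c : Euc n) (r : ℝ) : Euc n → ℝ := (ball c r).indicator fun _ => (1 : ℝ)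

/-- The characteristic function of a ball, as an `ℝ≥0∞` valued function. -/
def chiE (n : ℕ) (c : Euc n) (r : ℝ) : Euc n → ℝ≥0∞ := (ball c r).indicator fun _ => (1 : ℝ≥0∞)

/-- `T` is bounded on `X` and is given, off the support, by integration against the
kernel of the `j`-th Riesz transform on bounded compactly supported functions. -/
def IsRieszOn (n : ℕ) (j : Fin n) (X : BFL n) (T : (Euc n → ℝ) → Euc n → ℝ) : Prop :=
  (∃ C : ℝ≥0∞, C < ⊤ ∧ ∀ f : Euc n → ℝ, X.N (T f) ≤ C * X.N f) ∧
  ∀ f : Euc n → ℝ, Measurable f → (∃ M : ℝ, ∀ x, |f x| ≤ M) → HasCompactSupport f →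
    ∀ x ∉ tsupport f, T f x = ∫ y, ((x j - y j) / ‖x - y‖ ^ ((n : ℝ) + 1)) * f y

/-! If the balls `B`, `B'` of radius `r` are `4r` apart in the direction `e_j`, then for `x ∈ B'`
the kernel `(x_j - y_j) / |x - y|ⁿ⁺¹` has constant sign on `B` and size at least `2r / (6r)ⁿ⁺¹`,
so `|R_j χ_B| ≥ κₙ χ_{B'}` with `κₙ` depending only on `n`. The lattice property and the
boundedness of `R_j` then give `‖χ_{B'}‖ ≤ κₙ⁻¹ ‖R_j‖ ‖χ_B‖`, and exchanging the roles of the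
two balls (which flips the sign of the kernel) gives the reverse inequality. -/
def rieszKernel (n : ℕ) (j : Fin n) (x y : Euc n) : ℝ :=
  (x j - y j) / ‖x - y‖ ^ ((n : ℝ) + 1)

/-- `2r / (6r)ⁿ⁺¹ · rⁿ |B(0,1)|`: the lower bound of the kernel times the volume of the ball,
in which `r` cancels. -/
def rieszBallConst (n : ℕ) : ℝ :=
  2 * (volume (ball (0 : Euc n) 1)).toReal / 6 ^ (n + 1)

lemma rieszBallConst_pos (n : ℕ) : 0 < rieszBallConst n := by
  have hvol : 0 < (volume (ball (0 : Euc n) 1)).toReal :=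
    ENNReal.toReal_pos (measure_ball_pos _ _ one_pos).ne' measure_ball_lt_top.ne
  unfold rieszBallConst
  positivity

lemma volume_ball_toReal {n : ℕ} (c : Euc n) {r : ℝ} (hr : 0 < r) :
    (volume (ball c r)).toReal = r ^ n * (volume (ball (0 : Euc n) 1)).toReal := by
  rw [Measure.addHaar_ball_of_pos _ _ hr, finrank_euclideanSpace_fin, ENNReal.toReal_mul,
    ENNReal.toReal_ofReal (by positivity)]

lemma measurable_rieszKernel {n : ℕ} (j : Fin n) (x : Euc n) :
    Measurable (rieszKernel n j x) := by
  have hnum : Continuous fun y : Euc n => x j - y j :=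
    continuous_const.sub (EuclideanSpace.proj j).continuous
  have hden : Continuous fun y : Euc n => ‖x - y‖ ^ ((n : ℝ) + 1) :=
    (continuous_const.sub continuous_id).norm.rpow_const fun _ => Or.inr (by positivity)
  exact hnum.measurable.div hden.measurable

lemma rieszKernel_eq_div_pow (n : ℕ) (j : Fin n) (x y : Euc n) :
    rieszKernel n j x y = (x j - y j) / ‖x - y‖ ^ (n + 1) := by
  rw [rieszKernel, ← Real.rpow_natCast]
  push_cast
  rfl

lemma abs_apply_le_norm {n : ℕ} (x : Euc n) (j : Fin n) : |x j| ≤ ‖x‖ :=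
  PiLp.norm_apply_le x j

section KernelBounds

variable {n : ℕ} {j : Fin n} {x y : Euc n} {r s : ℝ}

lemma two_mul_le_norm_sub (hs : |s| = 1) (hsep : 2 * r ≤ s * (x j - y j)) :
    2 * r ≤ ‖x - y‖ :=
  calc 2 * r ≤ |s * (x j - y j)| := hsep.trans (le_abs_self _)
    _ = |(x - y) j| := by rw [abs_mul, hs, one_mul]; rfl
    _ ≤ ‖x - y‖ := abs_apply_le_norm _ _

lemma le_mul_rieszKernel (hr : 0 < r) (hs : |s| = 1) (hsep : 2 * r ≤ s * (x j - y j))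
    (hdist : ‖x - y‖ ≤ 6 * r) :
    2 * r / (6 * r) ^ (n + 1) ≤ s * rieszKernel n j x y := by
  have hnorm := two_mul_le_norm_sub hs hsep
  rw [rieszKernel_eq_div_pow, mul_div_assoc']
  exact div_le_div₀ (by linarith) hsep (pow_pos (by linarith) _)
    (pow_le_pow_left₀ (norm_nonneg _) hdist _)

lemma abs_rieszKernel_le (hr : 0 < r) (hs : |s| = 1) (hsep : 2 * r ≤ s * (x j - y j))
    (hdist : ‖x - y‖ ≤ 6 * r) :
    |rieszKernel n j x y| ≤ 6 * r / (2 * r) ^ (n + 1) := by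
  have hnorm := two_mul_le_norm_sub hs hsep
  have hcoord : |x j - y j| ≤ 6 * r := (abs_apply_le_norm (x - y) j).trans hdist
  rw [rieszKernel_eq_div_pow, abs_div, abs_of_nonneg (pow_nonneg (norm_nonneg (x - y)) _)]
  exact div_le_div₀ (by linarith) hcoord (by positivity)
    (pow_le_pow_left₀ (by linarith) hnorm _)

end KernelBounds

lemma rieszBallConst_le_abs_integral {n : ℕ} (j : Fin n) {x c : Euc n} {r s : ℝ} (hr : 0 < r)
    (hs : |s| = 1)
    (hsep : ∀ y ∈ ball c r, 2 * r ≤ s * (x j - y j) ∧ ‖x - y‖ ≤ 6 * r) :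
    rieszBallConst n ≤ |∫ y, rieszKernel n j x y * chiR n c r y| := by
  have hint : IntegrableOn (rieszKernel n j x) (ball c r) :=
    Measure.integrableOn_of_bounded measure_ball_lt_top.ne
      (measurable_rieszKernel j x).aestronglyMeasurable
      ((ae_restrict_iff' measurableSet_ball).2 (ae_of_all _ fun y hy =>
        abs_rieszKernel_le hr hs (hsep y hy).1 (hsep y hy).2))
  have hconst : 2 * r / (6 * r) ^ (n + 1) * (volume (ball c r)).toReal = rieszBallConst n := by
    rw [volume_ball_toReal c hr, rieszBallConst]
    field_simp
    ring
  have hchi : (fun y => rieszKernel n j x y * chiR n c r y) = (ball c r).indicator (rieszKernel n j x) := by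
    funext y
    by_cases hy : y ∈ ball c r <;> simp [chiR, hy]
  calc rieszBallConst n ≤ s * ∫ y in ball c r, rieszKernel n j x y := by
        rw [← hconst, ← integral_const_mul]
        exact setIntegral_ge_of_const_le_real measurableSet_ball measure_ball_lt_top.ne
          (fun y hy => le_mul_rieszKernel hr hs (hsep y hy).1 (hsep y hy).2) (hint.const_mul s)
    _ ≤ |s * ∫ y in ball c r, rieszKernel n j x y| := le_abs_self _
    _ = |∫ y, rieszKernel n j x y * chiR n c r y| := by
        rw [abs_mul, hs, one_mul, hchi, integral_indicator measurableSet_ball]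

lemma sub_apply_ge_and_norm_sub_le {n : ℕ} (j : Fin n) {c x y : Euc n} {r : ℝ}
    (hx : x ∈ closedBall (c + (4 * r) • EuclideanSpace.single j (1 : ℝ)) r)
    (hy : y ∈ closedBall c r) :
    2 * r ≤ x j - y j ∧ ‖x - y‖ ≤ 6 * r := by
  set e : Euc n := (4 * r) • EuclideanSpace.single j (1 : ℝ)
  have hr : 0 ≤ r := nonempty_closedBall.1 ⟨y, hy⟩
  rw [mem_closedBall, dist_eq_norm] at hx hy
  have hej : e j = 4 * r := by simp [e]
  have hnorm_e : ‖e‖ = 4 * r := by simp [e, norm_smul, abs_of_nonneg hr]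
  have hxj := (abs_le.1 ((abs_apply_le_norm (x - (c + e)) j).trans hx)).1
  have hyj := (abs_le.1 ((abs_apply_le_norm (y - c) j).trans hy)).2
  simp only [PiLp.sub_apply, PiLp.add_apply, hej] at hxj hyj
  refine ⟨by linarith, ?_⟩
  calc ‖x - y‖ = ‖(x - (c + e)) + e - (y - c)‖ := by congr 1; abel
    _ ≤ ‖x - (c + e)‖ + ‖e‖ + ‖y - c‖ := norm_sub_le_of_le (norm_add_le _ _) le_rfl
    _ ≤ 6 * r := by linarith

lemma measurable_chiR (n : ℕ) (c : Euc n) (r : ℝ) : Measurable (chiR n c r) :=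
  measurable_const.indicator measurableSet_ball

lemma abs_chiR_le_one (n : ℕ) (c : Euc n) (r : ℝ) (x : Euc n) : |chiR n c r x| ≤ 1 := by
  by_cases hx : x ∈ ball c r <;> simp [chiR, hx]

lemma tsupport_chiR_subset (n : ℕ) (c : Euc n) (r : ℝ) : tsupport (chiR n c r) ⊆ closedBall c r :=
  closure_minimal (support_indicator_subset.trans ball_subset_closedBall) isClosed_closedBall

lemma hasCompactSupport_chiR (n : ℕ) (c : Euc n) (r : ℝ) : HasCompactSupport (chiR n c r) :=
  (isCompact_closedBall c r).of_isClosed_subset (isClosed_tsupport _) (tsupport_chiR_subset n c r)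

lemma BFL.N_le_of_mul_abs_le {n : ℕ} (X : BFL n) {κ : ℝ} (hκ : 0 < κ) {g h : Euc n → ℝ}
    (hgh : ∀ x, κ * |g x| ≤ |h x|) : X.N g ≤ ENNReal.ofReal κ⁻¹ * X.N h := by
  calc X.N g ≤ X.N (fun x => κ⁻¹ * h x) := X.mono _ _ fun x => by
        rw [abs_mul, abs_of_pos (inv_pos.2 hκ), le_inv_mul_iff₀ hκ]
        exact hgh x
    _ = ENNReal.ofReal κ⁻¹ * X.N h := by rw [X.smul, abs_of_pos (inv_pos.2 hκ)]

lemma IsRieszOn.N_chiR_le {n : ℕ} {j : Fin n} {X : BFL n} {T : (Euc n → ℝ) → Euc n → ℝ}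
    (hT : IsRieszOn n j X T) {C : ℝ≥0∞} (hC : ∀ f, X.N (T f) ≤ C * X.N f)
    {c₁ c₂ : Euc n} {r s : ℝ} (hr : 0 < r) (hs : |s| = 1)
    (hsep : ∀ x ∈ closedBall c₂ r, ∀ y ∈ closedBall c₁ r, 2 * r ≤ s * (x j - y j) ∧ ‖x - y‖ ≤ 6 * r) :
    X.N (chiR n c₂ r) ≤ ENNReal.ofReal (rieszBallConst n)⁻¹ * C * X.N (chiR n c₁ r) := by
  have hpt : ∀ x, rieszBallConst n * |chiR n c₂ r x| ≤ |T (chiR n c₁ r) x| := by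
    intro x
    by_cases hx : x ∈ ball c₂ r
    · have hx' := ball_subset_closedBall hx
      -- with `y = x` the separation would read `2r ≤ 0`
      have hxout : x ∉ tsupport (chiR n c₁ r) := fun hmem => by
        have := (hsep x hx' x (tsupport_chiR_subset n c₁ r hmem)).1
        simp only [sub_self, mul_zero] at this
        linarith
      rw [hT.2 _ (measurable_chiR n c₁ r) ⟨1, abs_chiR_le_one n c₁ r⟩ (hasCompactSupport_chiR n c₁ r)
        x hxout, chiR, indicator_of_mem hx, abs_one, mul_one]
      exact rieszBallConst_le_abs_integral j hr hs fun y hy => hsep x hx' y (ball_subset_closedBall hy)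
    · simp [chiR, hx]
  calc X.N (chiR n c₂ r) ≤ ENNReal.ofReal (rieszBallConst n)⁻¹ * X.N (T (chiR n c₁ r)) :=
        X.N_le_of_mul_abs_le (rieszBallConst_pos n) hpt
    _ ≤ _ := by rw [mul_assoc]; exact mul_le_mul_right (hC _) _

theorem stmt3_general (n : ℕ) (X : BFL n)
    (j : Fin n) (T : (Euc n → ℝ) → Euc n → ℝ) (hT : IsRieszOn n j X T) :
    ∃ C : ℝ≥0∞, 0 < C ∧ C < ⊤ ∧ ∀ (c : Euc n) (r : ℝ), 0 < r →
      X.N (chiR n c r) ≤ C * X.N (chiR n (c + (4 * r) • EuclideanSpace.single j (1 : ℝ)) r) ∧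
      X.N (chiR n (c + (4 * r) • EuclideanSpace.single j (1 : ℝ)) r) ≤ C * X.N (chiR n c r) := by
  obtain ⟨C₀, hC₀, hbound⟩ := hT.1
  set C := ENNReal.ofReal (rieszBallConst n)⁻¹ * C₀
  refine ⟨C + 1, by positivity,
    ENNReal.add_lt_top.2 ⟨ENNReal.mul_lt_top ofReal_lt_top hC₀, one_lt_top⟩, fun c r hr => ?_⟩
  have hC : C ≤ C + 1 := le_self_add
  constructor
  · refine (hT.N_chiR_le hbound hr (s := -1) (by simp) fun x hx y hy => ?_).trans
      (mul_le_mul_left hC _)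
    have := sub_apply_ge_and_norm_sub_le j hy hx
    exact ⟨by linarith, by rw [norm_sub_rev]; exact this.2⟩
  · refine (hT.N_chiR_le hbound hr (s := 1) (by simp) fun x hx y hy => ?_).trans
      (mul_le_mul_left hC _)
    simpa using sub_apply_ge_and_norm_sub_le j hx hy

theorem stmt3 (n : ℕ) (hn : 0 < n) (X : BFL n)
    (hXballs : ∀ (c : Euc n) (r : ℝ), 0 < r → 0 < X.N (chiR n c r) ∧ X.N (chiR n c r) < ⊤)
    (j : Fin n) (T : (Euc n → ℝ) → Euc n → ℝ) (hT : IsRieszOn n j X T) :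
    ∃ C : ℝ≥0∞, 0 < C ∧ C < ⊤ ∧ ∀ (c : Euc n) (r : ℝ), 0 < r →
      X.N (chiR n c r) ≤ C * X.N (chiR n (c + (4 * r) • EuclideanSpace.single j (1 : ℝ)) r) ∧
      X.N (chiR n (c + (4 * r) • EuclideanSpace.single j (1 : ℝ)) r) ≤ C * X.N (chiR n c r) :=
  stmt3_general n X j T hT
end
end

section
/- Let B and B' be balls in ℝ^n with the same radius r, c_{B'} = c_B + 4r·e_j. Then for every x ∈ B, ∫_{B'} (y_j - x_j)/|x-y|^{n+1} dy is comparable to 1, with implicit constants depending only on n. -/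
/-! For `x ∈ B` and `y ∈ B'`, both the coordinate gap `y j - x j` and the distance `‖x - y‖`
lie in `[2r, 6r]`, so the kernel lies between `2r / (6r)^(n+1)` and `6r / (2r)^(n+1)`.
Integrating over `B'`, whose volume is `r^n` times that of the unit ball, the powers of `r`
cancel. -/

open MeasureTheory Metric Set ENNReal

noncomputable section

lemma setIntegral_mem_Icc_of_forall_mem_Icc {X : Type*} [MeasurableSpace X] {μ : Measure X}
    {s : Set X} {f : X → ℝ} {a b : ℝ} (hs : MeasurableSet s) (hμs : μ s ≠ ∞)
    (hf : AEStronglyMeasurable f (μ.restrict s)) (hfab : ∀ x ∈ s, f x ∈ Icc a b) :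
    ∫ x in s, f x ∂μ ∈ Icc (a * μ.real s) (b * μ.real s) := by
  have hint : IntegrableOn f s μ := by
    refine ⟨hf, .restrict_of_bounded (C := max |a| |b|) hμs.lt_top ?_⟩
    filter_upwards [ae_restrict_mem hs] with x hx
    exact abs_le_max_abs_abs (hfab x hx).1 (hfab x hx).2
  refine ⟨setIntegral_ge_of_const_le_real hs hμs (fun x hx => (hfab x hx).1) hint, ?_⟩
  calc ∫ x in s, f x ∂μ ≤ ∫ _ in s, b ∂μ :=
        setIntegral_mono_on hint (integrableOn_const hμs) hs fun x hx => (hfab x hx).2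
    _ = b * μ.real s := by rw [setIntegral_const, smul_eq_mul, mul_comm]

lemma div_pow_mem_Icc {a b s t : ℝ} (ha : 0 < a) (m : ℕ) (hs : s ∈ Icc a b) (ht : t ∈ Icc a b) :
    t / s ^ m ∈ Icc (a / b ^ m) (b / a ^ m) := by
  have hab : a ≤ b := hs.1.trans hs.2
  constructor
  · exact div_le_div₀ (ha.le.trans ht.1) ht.1 (pow_pos (ha.trans_le hs.1) m)
      (pow_le_pow_left₀ (ha.le.trans hs.1) hs.2 m)
  · exact div_le_div₀ (ha.le.trans hab) ht.2 (by positivity) (pow_le_pow_left₀ ha.le hs.1 m)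

section ShiftedBall

variable {n : ℕ} {j : Fin n} {c x y : Euc n} {r d : ℝ}

lemma sub_apply_mem_Ioo_of_mem_ball_add_smul_single (hx : x ∈ ball c r)
    (hy : y ∈ ball (c + d • EuclideanSpace.single j 1) r) :
    y j - x j ∈ Ioo (d - 2 * r) (d + 2 * r) := by
  have hxj : |x j - c j| < r := ((x - c).norm_apply_le j).trans_lt (mem_ball_iff_norm.mp hx)
  have hyj : |y j - (c j + d)| < r := by
    have := ((y - (c + d • EuclideanSpace.single j 1)).norm_apply_le j).trans_lt
      (mem_ball_iff_norm.mp hy)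
    simpa [sub_add_eq_sub_sub] using this
  rw [abs_lt] at hxj hyj
  constructor <;> linarith

lemma dist_lt_of_mem_ball_add_smul_single (hx : x ∈ ball c r)
    (hy : y ∈ ball (c + d • EuclideanSpace.single j 1) r) :
    dist x y < |d| + 2 * r := by
  have hcc : dist c (c + d • EuclideanSpace.single j 1) = |d| := by
    simp [dist_eq_norm, norm_smul]
  calc dist x y ≤ dist x c + dist c (c + d • EuclideanSpace.single j 1) + dist _ y :=
        dist_triangle4 x c _ y
    _ < |d| + 2 * r := by rw [hcc, dist_comm _ y]; linarith [mem_ball.mp hx, mem_ball.mp hy]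

end ShiftedBall

lemma setIntegral_rieszKernel_mem_Icc {n : ℕ} {j : Fin n} {c x : Euc n} {r : ℝ} (hr : 0 < r)
    (hx : x ∈ ball c r) :
    ∫ y in ball (c + (4 * r) • EuclideanSpace.single j 1) r, (y j - x j) / ‖x - y‖ ^ ((n : ℝ) + 1)
      ∈ Icc (2 * volume.real (ball (0 : Euc n) 1) / 6 ^ (n + 1))
        (6 * volume.real (ball (0 : Euc n) 1) / 2 ^ (n + 1)) := by
  set c' := c + (4 * r) • EuclideanSpace.single j (1 : ℝ)
  have hkernel : ∀ y ∈ ball c' r, (y j - x j) / ‖x - y‖ ^ ((n : ℝ) + 1) ∈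
      Icc (2 * r / (6 * r) ^ (n + 1)) (6 * r / (2 * r) ^ (n + 1)) := by
    intro y hy
    have hcoord := sub_apply_mem_Ioo_of_mem_ball_add_smul_single hx hy
    have hdist := dist_lt_of_mem_ball_add_smul_single hx hy
    have hcoord_le : y j - x j ≤ dist x y := by
      rw [dist_comm, dist_eq_norm]
      exact (le_abs_self _).trans ((y - x).norm_apply_le j)
    rw [abs_of_pos (by positivity : 0 < 4 * r)] at hdist
    rw [← dist_eq_norm, show ((n : ℝ) + 1) = ((n + 1 : ℕ) : ℝ) by push_cast; ring,
      Real.rpow_natCast]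
    refine div_pow_mem_Icc (by positivity) _ ⟨?_, ?_⟩ ⟨?_, ?_⟩ <;>
      linarith [hcoord.1, hcoord.2]
  have hvol : volume.real (ball c' r) = r ^ n * volume.real (ball (0 : Euc n) 1) := by
    simp [measureReal_def, Measure.addHaar_ball_of_pos volume c' hr, hr.le]
  have hmeas : Measurable fun y : Euc n => (y j - x j) / ‖x - y‖ ^ ((n : ℝ) + 1) :=
    Measurable.div (by fun_prop) (by fun_prop)
  have h := setIntegral_mem_Icc_of_forall_mem_Icc measurableSet_ball
    (measure_ball_lt_top (μ := volume)).ne hmeas.aestronglyMeasurable hkernel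
  rw [hvol] at h
  convert h using 2 <;> rw [mul_pow] <;> field_simp <;> ring

lemma exists_pos_inv_le_and_le {a : ℝ} (ha : 0 < a) (b : ℝ) : ∃ C : ℝ, 0 < C ∧ C⁻¹ ≤ a ∧ b ≤ C :=
  ⟨max a⁻¹ b, lt_max_of_lt_left (inv_pos.2 ha), inv_le_of_inv_le₀ ha (le_max_left _ _),
    le_max_right _ _⟩

theorem stmt4_general (n : ℕ) (j : Fin n) :
    ∃ C : ℝ, 0 < C ∧ ∀ (c : Euc n) (r : ℝ), 0 < r →
      ∀ x ∈ ball c r,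
        C⁻¹ ≤ ∫ y in ball (c + (4 * r) • EuclideanSpace.single j (1 : ℝ)) r,
                (y j - x j) / ‖x - y‖ ^ ((n : ℝ) + 1) ∧
        (∫ y in ball (c + (4 * r) • EuclideanSpace.single j (1 : ℝ)) r,
                (y j - x j) / ‖x - y‖ ^ ((n : ℝ) + 1)) ≤ C := by
  have hV : 0 < volume.real (ball (0 : Euc n) 1) :=
    ENNReal.toReal_pos (measure_ball_pos volume 0 one_pos).ne' measure_ball_lt_top.ne
  obtain ⟨C, hC, hC_lower, hC_upper⟩ := exists_pos_inv_le_and_le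
    (by positivity : 0 < 2 * volume.real (ball (0 : Euc n) 1) / 6 ^ (n + 1))
    (6 * volume.real (ball (0 : Euc n) 1) / 2 ^ (n + 1))
  refine ⟨C, hC, fun c r hr x hx => ?_⟩
  have h := setIntegral_rieszKernel_mem_Icc (j := j) hr hx
  exact ⟨hC_lower.trans h.1, h.2.trans hC_upper⟩

theorem stmt4 (n : ℕ) (hn : 0 < n) (j : Fin n) :
    ∃ C : ℝ, 0 < C ∧ ∀ (c : Euc n) (r : ℝ), 0 < r →
      ∀ x ∈ ball c r,
        C⁻¹ ≤ ∫ y in ball (c + (4 * r) • EuclideanSpace.single j (1 : ℝ)) r,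
                (y j - x j) / ‖x - y‖ ^ ((n : ℝ) + 1) ∧
        (∫ y in ball (c + (4 * r) • EuclideanSpace.single j (1 : ℝ)) r,
                (y j - x j) / ‖x - y‖ ^ ((n : ℝ) + 1)) ≤ C :=
  stmt4_general n j
end
end

section
/- Let X be a Banach lattice of measurable functions on ℝ^n and Y a normed function space. Let 0 ≤ α < n. If the fractional maximal operator M_α is bounded from X to Y, then sup over all balls B of ‖χ_B‖_Y ‖χ_B‖_{X'} / |B|^{1−α/n} < ∞. -/
open MeasureTheory Metric Set ENNReal

noncomputable section

/-- A normed space of (nonnegative extended-real valued) measurable functions,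
modeled through its norm functional. -/
structure NFS (n : ℕ) where
  N : (Euc n → ℝ≥0∞) → ℝ≥0∞
  mono : ∀ g h : Euc n → ℝ≥0∞, (∀ x, g x ≤ h x) → N g ≤ N h
  smul : ∀ (a : ℝ≥0∞) (g : Euc n → ℝ≥0∞), N (fun x => a * g x) = a * N g

/-- The fractional maximal operator `M_α`. -/
def fracMax (n : ℕ) (α : ℝ) (g : Euc n → ℝ≥0∞) (x : Euc n) : ℝ≥0∞ :=
  ⨆ (c : Euc n) (r : ℝ) (_ : 0 < r ∧ x ∈ ball c r),
    (volume (ball c r)) ^ (α / (n : ℝ) - 1) * ∫⁻ y in ball c r, g y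

/-- The fractional integral (Riesz potential) `I_α`. -/
def fracInt (n : ℕ) (α : ℝ) (g : Euc n → ℝ≥0∞) (x : Euc n) : ℝ≥0∞ :=
  ∫⁻ y, g y * ENNReal.ofReal (‖x - y‖ ^ (α - (n : ℝ)))

theorem lintegral_mul_chiE {n : ℕ} (g : Euc n → ℝ≥0∞) (c : Euc n) (r : ℝ) :
    ∫⁻ x, g x * chiE n c r x = ∫⁻ x in ball c r, g x := by
  rw [← lintegral_indicator measurableSet_ball]
  congr 1 with x
  by_cases hx : x ∈ ball c r <;> simp [chiE, hx]

theorem average_mul_chiE_le_fracMax {n : ℕ} (α : ℝ) (g : Euc n → ℝ≥0∞) (c : Euc n) {r : ℝ}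
    (hr : 0 < r) (x : Euc n) :
    (volume (ball c r)) ^ (α / (n : ℝ) - 1) * (∫⁻ y in ball c r, g y) * chiE n c r x
      ≤ fracMax n α g x := by
  by_cases hx : x ∈ ball c r
  · rw [chiE, indicator_of_mem hx, mul_one]
    exact le_iSup_of_le c (le_iSup_of_le r (le_iSup_of_le ⟨hr, hx⟩ le_rfl))
  · simp [chiE, hx]

theorem NFS.N_chiE_mul_lintegral_le {n : ℕ} (Y : NFS n) (α : ℝ) (g : Euc n → ℝ≥0∞)
    (c : Euc n) {r : ℝ} (hr : 0 < r) :
    Y.N (chiE n c r) * ∫⁻ y in ball c r, g y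
      ≤ (volume (ball c r)) ^ (1 - α / (n : ℝ)) * Y.N (fracMax n α g) := by
  set v := volume (ball c r)
  have hcancel : v ^ (1 - α / (n : ℝ)) * v ^ (α / (n : ℝ) - 1) = 1 := by
    rw [← ENNReal.rpow_add _ _ (measure_ball_pos volume c hr).ne' measure_ball_lt_top.ne]
    norm_num
  calc Y.N (chiE n c r) * ∫⁻ y in ball c r, g y
      = v ^ (1 - α / (n : ℝ)) *
          Y.N (fun x => v ^ (α / (n : ℝ) - 1) * (∫⁻ y in ball c r, g y) * chiE n c r x) := by
        rw [Y.smul, ← mul_assoc, ← mul_assoc, hcancel, one_mul, mul_comm]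
    _ ≤ v ^ (1 - α / (n : ℝ)) * Y.N (fracMax n α g) := by
        gcongr
        exact Y.mono _ _ (average_mul_chiE_le_fracMax α g c hr)

theorem stmt6_general (n : ℕ) (α : ℝ)
    (X : BFL n) (Y : NFS n)
    (hbdd : ∃ C : ℝ≥0∞, C < ⊤ ∧ ∀ f : Euc n → ℝ, Measurable f →
      Y.N (fracMax n α fun x => ENNReal.ofReal |f x|) ≤ C * X.N f) :
    ∃ C : ℝ≥0∞, C < ⊤ ∧ ∀ (c : Euc n) (r : ℝ), 0 < r →
      Y.N (chiE n c r) * kdual X (chiE n c r) ≤ C * (volume (ball c r)) ^ (1 - α / (n : ℝ)) := by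
  obtain ⟨C, hC, hb⟩ := hbdd
  refine ⟨C, hC, fun c r hr => ?_⟩
  simp only [kdual, ENNReal.mul_iSup, iSup_le_iff, lintegral_mul_chiE]
  rintro f ⟨hfm, hfX⟩
  calc Y.N (chiE n c r) * ∫⁻ x in ball c r, ENNReal.ofReal |f x|
      ≤ (volume (ball c r)) ^ (1 - α / (n : ℝ)) *
          Y.N (fracMax n α fun x => ENNReal.ofReal |f x|) := Y.N_chiE_mul_lintegral_le α _ c hr
    _ ≤ (volume (ball c r)) ^ (1 - α / (n : ℝ)) * (C * 1) := by
        gcongr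
        exact (hb f hfm).trans (by gcongr)
    _ = C * (volume (ball c r)) ^ (1 - α / (n : ℝ)) := by rw [mul_one, mul_comm]

theorem stmt6 (n : ℕ) (hn : 0 < n) (α : ℝ) (hα : 0 ≤ α) (hαn : α < n)
    (X : BFL n) (Y : NFS n)
    (hbdd : ∃ C : ℝ≥0∞, C < ⊤ ∧ ∀ f : Euc n → ℝ, Measurable f →
      Y.N (fracMax n α fun x => ENNReal.ofReal |f x|) ≤ C * X.N f) :
    ∃ C : ℝ≥0∞, C < ⊤ ∧ ∀ (c : Euc n) (r : ℝ), 0 < r →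
      Y.N (chiE n c r) * kdual X (chiE n c r) ≤ C * (volume (ball c r)) ^ (1 - α / (n : ℝ)) :=
  stmt6_general n α X Y hbdd
end
end

section
/- Let X be a Banach lattice of measurable functions on ℝ^n and Y a normed function space, 0 < α < n. If the fractional integral I_α (defined by I_α f(x) = ∫ f(y)|x−y|^{α−n} dy) maps X boundedly into Y, then sup over all balls B of ‖χ_B‖_Y ‖(Mχ_B)^{1−α/n}‖_{X'} / |B|^{1−α/n} < ∞, where M is the Hardy–Littlewood maximal function. -/
open MeasureTheory Metric Set ENNReal

noncomputable section

/-!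
Write `B = B(c, r)` and `R(y) = r + |y - c|`. A ball containing `y` and meeting `B` has
radius at least `R(y) / 4`, so `Mχ_B(y) ≤ (4r / R(y))ⁿ`, that is,
`(Mχ_B)^{1-α/n}(y) ≤ (4r)^{n-α} R(y)^{α-n}`. Since `|x - y| ≤ R(y)` for `x ∈ B` and the
kernel is decreasing, `∫ |f| (Mχ_B)^{1-α/n} ≤ (4r)^{n-α} I_α|f|(x)` for every `x ∈ B`;
taking `Y`-norms, `‖χ_B‖_Y ∫ |f| (Mχ_B)^{1-α/n} ≤ (4r)^{n-α} C ‖f‖_X`. The supremum over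
`‖f‖_X ≤ 1` is the Köthe dual norm, and `r^{n-α}` is a fixed multiple of `|B|^{1-α/n}`.
-/

section AddHaar

variable {E : Type*} [NormedAddCommGroup E] [NormedSpace ℝ E] [MeasurableSpace E] [BorelSpace E]
  [FiniteDimensional ℝ E] (μ : Measure E) [μ.IsAddHaarMeasure]

theorem inv_addHaar_ball_mul_addHaar_ball (x y : E) {r ρ : ℝ} (hr : 0 < r) (hρ : 0 < ρ) :
    (μ (ball y ρ))⁻¹ * μ (ball x r) = ENNReal.ofReal ((r / ρ) ^ Module.finrank ℝ E) := by
  have hω₀ : μ (ball 0 1) ≠ 0 := (measure_ball_pos μ _ one_pos).ne'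
  have hω : μ (ball 0 1) ≠ ⊤ := measure_ball_lt_top.ne
  rw [Measure.addHaar_ball_of_pos μ x hr, Measure.addHaar_ball_of_pos μ y hρ,
    ENNReal.mul_inv (Or.inl (ENNReal.ofReal_pos.2 (by positivity)).ne') (Or.inl ofReal_ne_top),
    mul_mul_mul_comm, ENNReal.inv_mul_cancel hω₀ hω, mul_one,
    mul_comm, ← div_eq_mul_inv, ← ENNReal.ofReal_div_of_pos (by positivity), div_pow]

theorem inv_addHaar_unitBall_rpow_mul_addHaar_ball_rpow (x : E) {r : ℝ} (hr : 0 < r) (t : ℝ) :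
    (μ (ball 0 1))⁻¹ ^ t * μ (ball x r) ^ t =
      ENNReal.ofReal (r ^ ((Module.finrank ℝ E : ℝ) * t)) := by
  have hω₀ : μ (ball 0 1) ≠ 0 := (measure_ball_pos μ _ one_pos).ne'
  rw [← ENNReal.mul_rpow_of_ne_top (ENNReal.inv_ne_top.2 hω₀) measure_ball_lt_top.ne,
    Measure.addHaar_ball_of_pos μ x hr, mul_left_comm,
    ENNReal.inv_mul_cancel hω₀ measure_ball_lt_top.ne, mul_one,
    ENNReal.ofReal_rpow_of_pos (by positivity), ← Real.rpow_natCast, ← Real.rpow_mul hr.le]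

end AddHaar

variable {n : ℕ}

theorem setLIntegral_chiE (c : Euc n) (r : ℝ) (s : Set (Euc n)) :
    ∫⁻ x in s, chiE n c r x = volume (ball c r ∩ s) := by
  rw [chiE, lintegral_indicator measurableSet_ball, setLIntegral_one,
    Measure.restrict_apply measurableSet_ball]

theorem hlMax_chiE_le {c : Euc n} {r : ℝ} (hr : 0 < r) (y : Euc n) :
    hlMax n (chiE n c r) y ≤ ENNReal.ofReal ((4 * r / (r + dist y c)) ^ n) := by
  have hR : 0 < r + dist y c := by positivity
  refine iSup_le fun c' => iSup_le fun ρ => iSup_le fun ⟨hρ, hy⟩ => ?_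
  rw [setLIntegral_chiE]
  obtain he | ⟨z, hzc, hzc'⟩ := (ball c r ∩ ball c' ρ).eq_empty_or_nonempty
  · simp [he]
  have hR_le : r + dist y c ≤ 2 * r + 2 * ρ := by
    have := dist_triangle4 y c' z c
    rw [mem_ball] at hzc hzc' hy
    linarith [dist_comm c' z]
  rcases le_total ρ r with hρr | hrρ
  · calc (volume (ball c' ρ))⁻¹ * volume (ball c r ∩ ball c' ρ)
        ≤ (volume (ball c' ρ))⁻¹ * volume (ball c' ρ) := by gcongr; exact inter_subset_right
      _ = ENNReal.ofReal 1 := by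
        rw [ENNReal.inv_mul_cancel (measure_ball_pos _ _ hρ).ne' measure_ball_lt_top.ne,
          ENNReal.ofReal_one]
      _ ≤ ENNReal.ofReal ((4 * r / (r + dist y c)) ^ n) := by
        gcongr
        exact one_le_pow₀ ((one_le_div hR).2 (by linarith))
  · calc (volume (ball c' ρ))⁻¹ * volume (ball c r ∩ ball c' ρ)
        ≤ (volume (ball c' ρ))⁻¹ * volume (ball c r) := by gcongr; exact inter_subset_left
      _ = ENNReal.ofReal ((r / ρ) ^ n) := by
        rw [inv_addHaar_ball_mul_addHaar_ball volume c c' hr hρ, finrank_euclideanSpace_fin]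
      _ ≤ ENNReal.ofReal ((4 * r / (r + dist y c)) ^ n) := by
        refine ENNReal.ofReal_le_ofReal (pow_le_pow_left₀ (by positivity) ?_ n)
        rw [div_le_div_iff₀ (by positivity) hR]
        nlinarith

theorem hlMax_chiE_rpow_le (hn : 0 < n) {α : ℝ} (hαn : α ≤ n) {c : Euc n} {r : ℝ} (hr : 0 < r)
    (y : Euc n) :
    hlMax n (chiE n c r) y ^ (1 - α / n) ≤
      ENNReal.ofReal ((4 * r) ^ ((n : ℝ) - α) * (r + dist y c) ^ (α - n)) := by
  have hR : 0 < r + dist y c := by positivity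
  have hs : 0 ≤ 1 - α / n := sub_nonneg.2 ((div_le_one (by positivity)).2 hαn)
  calc hlMax n (chiE n c r) y ^ (1 - α / n)
      ≤ ENNReal.ofReal ((4 * r / (r + dist y c)) ^ n) ^ (1 - α / n) := by
        gcongr; exact hlMax_chiE_le hr y
    _ = ENNReal.ofReal ((4 * r) ^ ((n : ℝ) - α) * (r + dist y c) ^ (α - n)) := by
        rw [ENNReal.ofReal_rpow_of_nonneg (by positivity) hs, ← Real.rpow_natCast,
          ← Real.rpow_mul (by positivity), mul_one_sub, mul_div_cancel₀ _ (by positivity),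
          Real.div_rpow (by positivity) hR.le, div_eq_mul_inv, ← Real.rpow_neg hR.le, neg_sub]

theorem lintegral_mul_hlMax_chiE_rpow_le_fracInt (hn : 0 < n) {α : ℝ} (hαn : α ≤ n)
    {c x : Euc n} {r : ℝ} (hx : x ∈ ball c r) (g : Euc n → ℝ≥0∞) :
    ∫⁻ y, g y * hlMax n (chiE n c r) y ^ (1 - α / n) ≤
      ENNReal.ofReal ((4 * r) ^ ((n : ℝ) - α)) * fracInt n α g x := by
  have hr : 0 < r := pos_of_mem_ball hx
  -- makes `volume` on `Euc n` atomless, for `measure_singleton`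
  have : Nonempty (Fin n) := ⟨⟨0, hn⟩⟩
  rw [fracInt, ← lintegral_const_mul' _ _ ofReal_ne_top]
  refine lintegral_mono_ae ?_
  filter_upwards [compl_mem_ae_iff.mpr (measure_singleton x)] with y (hy : y ≠ x)
  have hxy : 0 < ‖x - y‖ := norm_pos_iff.2 (sub_ne_zero.2 hy.symm)
  have hxy_le : ‖x - y‖ ≤ r + dist y c := by
    rw [← dist_eq_norm]
    linarith [dist_triangle x c y, mem_ball.1 hx, dist_comm c y]
  calc g y * hlMax n (chiE n c r) y ^ (1 - α / n)
      ≤ g y * ENNReal.ofReal ((4 * r) ^ ((n : ℝ) - α) * (r + dist y c) ^ (α - n)) := by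
        gcongr; exact hlMax_chiE_rpow_le hn hαn hr y
    _ ≤ g y * ENNReal.ofReal ((4 * r) ^ ((n : ℝ) - α) * ‖x - y‖ ^ (α - n)) := by
        gcongr g y * ENNReal.ofReal (_ * ?_)
        exact Real.rpow_le_rpow_of_nonpos hxy hxy_le (by linarith)
    _ = ENNReal.ofReal ((4 * r) ^ ((n : ℝ) - α)) *
          (g y * ENNReal.ofReal (‖x - y‖ ^ (α - n))) := by
        rw [ENNReal.ofReal_mul (by positivity)]; ring

theorem NFS.mul_N_chiE_le (Y : NFS n) {c : Euc n} {r : ℝ} {a b : ℝ≥0∞} {g : Euc n → ℝ≥0∞}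
    (h : ∀ x ∈ ball c r, a ≤ b * g x) : a * Y.N (chiE n c r) ≤ b * Y.N g := by
  rw [← Y.smul, ← Y.smul]
  refine Y.mono _ _ fun x => ?_
  by_cases hx : x ∈ ball c r
  · simpa [chiE, hx] using h x hx
  · simp [chiE, hx]

theorem mul_kdual_le {X : BFL n} {g : Euc n → ℝ≥0∞} {a K : ℝ≥0∞}
    (h : ∀ f, Measurable f → X.N f ≤ 1 → a * ∫⁻ x, ENNReal.ofReal |f x| * g x ≤ K) :
    a * kdual X g ≤ K := by
  simp only [kdual, ENNReal.mul_iSup, iSup_le_iff]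
  exact fun f hf => h f hf.1 hf.2

theorem mul_kdual_hlMax_chiE_rpow_le (hn : 0 < n) {α : ℝ} (hαn : α ≤ n) {X : BFL n}
    {Y : NFS n} {C : ℝ≥0∞} (hIα : ∀ f : Euc n → ℝ, Measurable f →
      Y.N (fracInt n α fun x => ENNReal.ofReal |f x|) ≤ C * X.N f) (c : Euc n) (r : ℝ) :
    Y.N (chiE n c r) * kdual X (fun y => hlMax n (chiE n c r) y ^ (1 - α / n)) ≤
      ENNReal.ofReal ((4 * r) ^ ((n : ℝ) - α)) * C := by
  refine mul_kdual_le fun f hf hf1 => ?_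
  rw [mul_comm]
  calc _ ≤ ENNReal.ofReal ((4 * r) ^ ((n : ℝ) - α)) *
          Y.N (fracInt n α fun x => ENNReal.ofReal |f x|) :=
        Y.mul_N_chiE_le fun x hx => lintegral_mul_hlMax_chiE_rpow_le_fracInt hn hαn hx _
    _ ≤ ENNReal.ofReal ((4 * r) ^ ((n : ℝ) - α)) * (C * 1) := by
        gcongr; exact (hIα f hf).trans (by gcongr)
    _ = ENNReal.ofReal ((4 * r) ^ ((n : ℝ) - α)) * C := by rw [mul_one]

theorem stmt7_general (n : ℕ) (hn : 0 < n) (α : ℝ) (hαn : α < n)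
    (X : BFL n) (Y : NFS n)
    (hbdd : ∃ C : ℝ≥0∞, C < ⊤ ∧ ∀ f : Euc n → ℝ, Measurable f →
      Y.N (fracInt n α fun x => ENNReal.ofReal |f x|) ≤ C * X.N f) :
    ∃ C : ℝ≥0∞, C < ⊤ ∧ ∀ (c : Euc n) (r : ℝ), 0 < r →
      Y.N (chiE n c r) * kdual X (fun y => hlMax n (chiE n c r) y ^ (1 - α / (n : ℝ))) ≤
        C * (volume (ball c r)) ^ (1 - α / (n : ℝ)) := by
  obtain ⟨C, hC, hIα⟩ := hbdd
  set s := 1 - α / n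
  set ω := volume (ball (0 : Euc n) 1)
  have hs : 0 ≤ s := sub_nonneg.2 ((div_le_one (by positivity)).2 hαn.le)
  have hns : (n : ℝ) - α = n * s := by rw [mul_one_sub, mul_div_cancel₀ _ (by positivity)]
  refine ⟨ENNReal.ofReal (4 ^ ((n : ℝ) - α)) * C * ω⁻¹ ^ s, ?_, fun c r hr => ?_⟩
  · have hω₀ : ω ≠ 0 := (measure_ball_pos _ _ one_pos).ne'
    exact ENNReal.mul_lt_top (ENNReal.mul_lt_top ofReal_lt_top hC)
      (ENNReal.rpow_ne_top_of_nonneg hs (ENNReal.inv_ne_top.2 hω₀)).lt_top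
  calc _ ≤ ENNReal.ofReal ((4 * r) ^ ((n : ℝ) - α)) * C :=
        mul_kdual_hlMax_chiE_rpow_le hn hαn.le hIα c r
    _ = ENNReal.ofReal (4 ^ ((n : ℝ) - α)) * C * (ω⁻¹ ^ s * volume (ball c r) ^ s) := by
        rw [inv_addHaar_unitBall_rpow_mul_addHaar_ball_rpow volume c hr,
          finrank_euclideanSpace_fin, ← hns, Real.mul_rpow (by norm_num) hr.le,
          ENNReal.ofReal_mul (by positivity)]
        ring
    _ = _ := (mul_assoc _ _ _).symm

theorem stmt7 (n : ℕ) (hn : 0 < n) (α : ℝ) (hα : 0 < α) (hαn : α < n)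
    (X : BFL n) (Y : NFS n)
    (hbdd : ∃ C : ℝ≥0∞, C < ⊤ ∧ ∀ f : Euc n → ℝ, Measurable f →
      Y.N (fracInt n α fun x => ENNReal.ofReal |f x|) ≤ C * X.N f) :
    ∃ C : ℝ≥0∞, C < ⊤ ∧ ∀ (c : Euc n) (r : ℝ), 0 < r →
      Y.N (chiE n c r) * kdual X (fun y => hlMax n (chiE n c r) y ^ (1 - α / (n : ℝ))) ≤
        C * (volume (ball c r)) ^ (1 - α / (n : ℝ)) :=
  stmt7_general n hn α hαn X Y hbdd
end
end
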